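/- Let D be an n×n strict circular Robinson dissimilarity matrix, let I be a proper arc of [n] with 2 ≤ |I| ≤ n−2, and let σ_I be the permutation of [n] that reverses I. Suppose the matrix (i,j) ↦ D(σ_I(i), σ_I(j)) is circular Robinson. Then for every i ∉ I, every maximizer of j ↦ D(i,j) over j ∈ [n] lies in I; and for every i ∈ I, every maximizer of j ↦ D(i,j) over j ∈ [n] lies in Iᶜ. -/

import Mathlib

/-- The standard cyclic order on `Fin n`. -/
def CycOrd {n : ℕ} (i j k : Fin n) : Prop :=
  (i < j ∧ j < k) ∨ (j < k ∧ k < i) ∨ (k < i ∧ i < j)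

/-- `i,j,k,l` are pairwise distinct and cyclically ordered. -/
def CycOrd4 {n : ℕ} (i j k l : Fin n) : Prop :=
  i ≠ j ∧ i ≠ k ∧ i ≠ l ∧ j ≠ k ∧ j ≠ l ∧ k ≠ l ∧ CycOrd i j k ∧ CycOrd i k l

/-- `D` is a dissimilarity matrix. -/
def IsDissim {n : ℕ} (D : Fin n → Fin n → ℝ) : Prop :=
  (∀ i j, D i j = D j i) ∧ (∀ i j, 0 ≤ D i j) ∧ (∀ i, D i i = 0)

/-- `D` is a circular Robinson matrix. -/
def CircRobinson {n : ℕ} (D : Fin n → Fin n → ℝ) : Prop :=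
  ∀ i j k l : Fin n, CycOrd4 i j k l → min (D j k) (D k l) ≤ D i k

/-- `D` is a strict circular Robinson matrix. -/
def StrictCircRobinson {n : ℕ} (D : Fin n → Fin n → ℝ) : Prop :=
  ∀ i j k l : Fin n, CycOrd4 i j k l → min (D j k) (D k l) < D i k

open Fin.NatCast in
/-- The arc `{a, a+1, …, a+k}` (mod `n`) of `Fin n`. -/
def arcSet (n : ℕ) [NeZero n] (a : Fin n) (k : ℕ) : Set (Fin n) :=
  {x | ∃ t : ℕ, t ≤ k ∧ x = a + (t : Fin n)}

open Fin.NatCast in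
open Classical in
/-- The permutation of `Fin n` reversing the arc `{a, …, a+k}`. -/
noncomputable def arcRev (n : ℕ) [NeZero n] (a : Fin n) (k : ℕ) (x : Fin n) : Fin n :=
  if (∃ t : ℕ, t ≤ k ∧ x = a + (t : Fin n)) then a + (k : Fin n) - (x - a) else x

/-!
If `j` maximizes the row of `i`, the Robinson condition makes that row grow towards `j`: whenever
the chord `p i` crosses the chord `q j`, `D q i ≤ D p i`, strictly for a strict matrix. Suppose `i`
and its maximizer `j` lie on the same side of the arc `I`. Then there are `p`, `q` with `p i`
crossing `q j` which the reversal of `I` exchanges while preserving that crossing pattern: the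
endpoints `a`, `a + k` of `I` when `i, j ∉ I`, and the outer neighbours `a + k + 1`, `a - 1` of `I`,
with `i`, `j` replaced by their mirror images, when `i, j ∈ I`. The two matrices then give
`D q i < D p i ≤ D q i`. (A maximizer `j` differs from `i`, as strictness forces a positive entry
in every row.)
-/

open Fin.NatCast

section CyclicOrder

variable {n : ℕ}

theorem CycOrd4.rotate {i j k l : Fin n} (h : CycOrd4 i j k l) : CycOrd4 j k l i := by
  simp only [CycOrd4, CycOrd, ne_eq, Fin.ext_iff, Fin.lt_def] at h ⊢
  omega

def ChordsCross (p i q j : Fin n) : Prop :=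
  CycOrd4 p q i j ∨ CycOrd4 p j i q

theorem ChordsCross.swap_left {p i q j : Fin n} (h : ChordsCross p i q j) :
    ChordsCross i p q j :=
  (h.imp (fun h => h.rotate.rotate) fun h => h.rotate.rotate).symm

theorem ChordsCross.swap_right {p i q j : Fin n} (h : ChordsCross p i q j) :
    ChordsCross p i j q :=
  h.symm

theorem cycOrd4_add_natCast [NeZero n] (a : Fin n) {p q i j : ℕ}
    (h : p < q ∧ q < i ∧ i < j ∧ j < n ∨ j < p ∧ p < q ∧ q < i ∧ i < n) :
    CycOrd4 (a + (p : Fin n)) (a + (q : Fin n)) (a + (i : Fin n)) (a + (j : Fin n)) := by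
  have hp : p < n := by omega
  have hq : q < n := by omega
  have hi : i < n := by omega
  have hj : j < n := by omega
  simp only [CycOrd4, CycOrd, ne_eq, Fin.ext_iff, Fin.lt_def, Fin.val_add_eq_ite,
    Fin.val_cast_of_lt hp, Fin.val_cast_of_lt hq, Fin.val_cast_of_lt hi, Fin.val_cast_of_lt hj]
  have ha := a.isLt
  split_ifs <;> omega

theorem chordsCross_add_natCast [NeZero n] (a : Fin n) {p i q j : ℕ}
    (hq : p < q ∧ q < i) (hj : j < p ∨ i < j) (hi : i < n) (hjn : j < n) :
    ChordsCross (a + (p : Fin n)) (a + (i : Fin n)) (a + (q : Fin n)) (a + (j : Fin n)) :=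
  Or.inl (cycOrd4_add_natCast a (by omega))

end CyclicOrder

section Robinson

variable {n : ℕ} {D : Fin n → Fin n → ℝ} {p i q j : Fin n}

theorem CircRobinson.min_le_of_chordsCross (hR : CircRobinson D)
    (hsymm : ∀ x y, D x y = D y x) (h : ChordsCross p i q j) :
    min (D q i) (D i j) ≤ D p i := by
  rcases h with h | h
  · exact hR _ _ _ _ h
  · simpa only [hsymm j i, hsymm i q, min_comm] using hR _ _ _ _ h

theorem StrictCircRobinson.min_lt_of_chordsCross (hR : StrictCircRobinson D)
    (hsymm : ∀ x y, D x y = D y x) (h : ChordsCross p i q j) :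
    min (D q i) (D i j) < D p i := by
  rcases h with h | h
  · exact hR _ _ _ _ h
  · simpa only [hsymm j i, hsymm i q, min_comm] using hR _ _ _ _ h

theorem StrictCircRobinson.pos_of_chordsCross (hR : StrictCircRobinson D)
    (hnonneg : ∀ x y, 0 ≤ D x y) (h : ChordsCross p i q j) : 0 < D p i := by
  rcases h with h | h <;>
    exact (le_min (hnonneg _ _) (hnonneg _ _)).trans_lt (hR _ _ _ _ h)

theorem IsDissim.rowMax_ne_self [NeZero n] (hD : IsDissim D) (hR : StrictCircRobinson D)
    (hn : 4 ≤ n) (hmax : ∀ y, D i y ≤ D i j) : j ≠ i := by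
  rintro rfl
  have hpos := hR.pos_of_chordsCross hD.2.1
    (chordsCross_add_natCast j (p := 0) (i := 2) (q := 1) (j := 3) (by omega) (by omega)
      (by omega) (by omega))
  rw [Nat.cast_zero, add_zero] at hpos
  linarith [hmax (j + (2 : ℕ)), hD.2.2 j]

theorem not_rowMax_of_chordsCross_of_swap {σ : Fin n → Fin n} (hsymm : ∀ x y, D x y = D y x)
    (hR : StrictCircRobinson D) (hRσ : CircRobinson fun x y => D (σ x) (σ y))
    {p' i' q' j' : Fin n} (hmax : ∀ y, D i y ≤ D i j)
    (hcross : ChordsCross p i q j) (hcross' : ChordsCross p' i' q' j')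
    (hp : σ p' = q) (hq : σ q' = p) (hi : σ i' = i) (hj : σ j' = j) : False := by
  have hlt := hR.min_lt_of_chordsCross hsymm hcross
  have hle := hRσ.min_le_of_chordsCross (fun x y => hsymm _ _) hcross'
  simp only [hp, hq, hi, hj] at hle
  rw [min_eq_left (hsymm q i ▸ hmax q)] at hlt
  rw [min_eq_left (hsymm p i ▸ hmax p)] at hle
  linarith

end Robinson

section Arc

variable {n : ℕ} [NeZero n] {a : Fin n} {k t : ℕ}

theorem exists_eq_add_natCast (a x : Fin n) : ∃ t < n, x = a + (t : Fin n) :=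
  ⟨(x - a).val, (x - a).isLt, by rw [Fin.cast_val_eq_self]; abel⟩

theorem add_natCast_mem_arcSet_iff (hk : k < n) (ht : t < n) :
    a + (t : Fin n) ∈ arcSet n a k ↔ t ≤ k := by
  refine ⟨fun ⟨s, hs, h⟩ => ?_, fun h => ⟨t, h, rfl⟩⟩
  have := congrArg Fin.val (add_left_cancel h)
  rw [Fin.val_cast_of_lt ht, Fin.val_cast_of_lt (by omega)] at this
  omega

theorem arcRev_add_natCast_of_le (ht : t ≤ k) :
    arcRev n a k (a + (t : Fin n)) = a + ((k - t : ℕ) : Fin n) := by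
  rw [arcRev, if_pos ⟨t, ht, rfl⟩, add_sub_cancel_left, sub_eq_iff_eq_add, add_assoc,
    ← Nat.cast_add, Nat.sub_add_cancel ht]

theorem arcRev_add_natCast_of_lt (hk : k < t) (ht : t < n) :
    arcRev n a k (a + (t : Fin n)) = a + (t : Fin n) :=
  if_neg (mt (add_natCast_mem_arcSet_iff (hk.trans ht) ht).1 (by omega))

end Arc

section ArcReversal

variable {n : ℕ} [NeZero n] {D : Fin n → Fin n → ℝ} {a : Fin n} {k p q : ℕ}

theorem rowMax_offset_le_of_lt_offset (hD : IsDissim D) (hR : StrictCircRobinson D)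
    (hrev : CircRobinson fun x y => D (arcRev n a k x) (arcRev n a k y)) (hk : 1 ≤ k)
    (hkp : k < p) (hp : p < n) (hq : q < n) (hpq : p ≠ q)
    (hmax : ∀ y, D (a + (p : Fin n)) y ≤ D (a + (p : Fin n)) (a + (q : Fin n))) : q ≤ k := by
  by_contra! hkq
  have hσp := arcRev_add_natCast_of_lt (a := a) hkp hp
  have hσq := arcRev_add_natCast_of_lt (a := a) hkq hq
  have hσ0 : arcRev n a k (a + ((0 : ℕ) : Fin n)) = a + (k : Fin n) := by
    rw [arcRev_add_natCast_of_le k.zero_le, Nat.sub_zero]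
  have hσk : arcRev n a k (a + (k : Fin n)) = a + ((0 : ℕ) : Fin n) := by
    rw [arcRev_add_natCast_of_le le_rfl, Nat.sub_self]
  rcases hpq.lt_or_gt with h | h
  · have hc := chordsCross_add_natCast a (p := 0) (q := k) ⟨by omega, hkp⟩ (Or.inr h) hp hq
    exact not_rowMax_of_chordsCross_of_swap hD.1 hR hrev hmax hc hc hσ0 hσk hσp hσq
  · have hc := (chordsCross_add_natCast a (p := k) (j := 0) ⟨hkq, h⟩ (Or.inl (by omega)) hp
      (by omega)).swap_right
    exact not_rowMax_of_chordsCross_of_swap hD.1 hR hrev hmax hc hc hσk hσ0 hσp hσq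

theorem lt_rowMax_offset_of_offset_le (hD : IsDissim D) (hR : StrictCircRobinson D)
    (hrev : CircRobinson fun x y => D (arcRev n a k x) (arcRev n a k y)) (hk : k + 3 ≤ n)
    (hpk : p ≤ k) (hq : q < n) (hpq : p ≠ q)
    (hmax : ∀ y, D (a + (p : Fin n)) y ≤ D (a + (p : Fin n)) (a + (q : Fin n))) : k < q := by
  by_contra! hqk
  have hσb : arcRev n a k (a + ((k + 1 : ℕ) : Fin n)) = a + ((k + 1 : ℕ) : Fin n) :=
    arcRev_add_natCast_of_lt (by omega) (by omega)
  have hσc : arcRev n a k (a + ((n - 1 : ℕ) : Fin n)) = a + ((n - 1 : ℕ) : Fin n) :=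
    arcRev_add_natCast_of_lt (by omega) (by omega)
  have hσp : arcRev n a k (a + ((k - p : ℕ) : Fin n)) = a + (p : Fin n) := by
    rw [arcRev_add_natCast_of_le (Nat.sub_le k p), Nat.sub_sub_self hpk]
  have hσq : arcRev n a k (a + ((k - q : ℕ) : Fin n)) = a + (q : Fin n) := by
    rw [arcRev_add_natCast_of_le (Nat.sub_le k q), Nat.sub_sub_self hqk]
  rcases hpq.lt_or_gt with h | h
  · have hc := (chordsCross_add_natCast a (i := k + 1) (j := n - 1) ⟨h, by omega⟩
      (Or.inr (by omega)) (by omega) (by omega)).swap_right.swap_left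
    have hc' := (chordsCross_add_natCast a (p := k - p) (i := n - 1) (q := k + 1) (j := k - q)
      ⟨by omega, by omega⟩ (Or.inl (by omega)) (by omega) (by omega)).swap_left
    exact not_rowMax_of_chordsCross_of_swap hD.1 hR hrev hmax hc hc' hσc hσb hσp hσq
  · have hc := (chordsCross_add_natCast a (i := n - 1) (q := k + 1) ⟨by omega, by omega⟩
      (Or.inl h) (by omega) hq).swap_left
    have hc' := (chordsCross_add_natCast a (p := k - p) (i := k + 1) (q := k - q) (j := n - 1)
      ⟨by omega, by omega⟩ (Or.inr (by omega)) (by omega) (by omega)).swap_right.swap_left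
    exact not_rowMax_of_chordsCross_of_swap hD.1 hR hrev hmax hc hc' hσb hσc hσp hσq

end ArcReversal

/-- If reversing the arc `I = {a, …, a+k}` (of size between 2 and n-2) of a strict
circular Robinson matrix yields a circular Robinson matrix, then points outside
`I` attain their maximal dissimilarity only inside `I`, and points inside `I`
attain it only in `Iᶜ`. -/
theorem statement13 (n : ℕ) [NeZero n] (D : Fin n → Fin n → ℝ)
    (hD : IsDissim D) (hR : StrictCircRobinson D)
    (a : Fin n) (k : ℕ) (hk1 : 1 ≤ k) (hk2 : k + 1 ≤ n - 2)
    (hrev : CircRobinson (fun i j => D (arcRev n a k i) (arcRev n a k j))) :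
    (∀ i ∉ arcSet n a k, ∀ j : Fin n,
      (∀ j' : Fin n, D i j' ≤ D i j) → j ∈ arcSet n a k) ∧
    (∀ i ∈ arcSet n a k, ∀ j : Fin n,
      (∀ j' : Fin n, D i j' ≤ D i j) → j ∉ arcSet n a k) := by
  have hkn : k < n := by omega
  constructor
  all_goals
    intro i hi j hmax
    obtain ⟨p, hp, rfl⟩ := exists_eq_add_natCast a i
    obtain ⟨q, hq, rfl⟩ := exists_eq_add_natCast a j
    have hpq : p ≠ q := fun h => hD.rowMax_ne_self hR (by omega) hmax (by rw [h])
    simp only [add_natCast_mem_arcSet_iff hkn hp, add_natCast_mem_arcSet_iff hkn hq] at hi ⊢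
  · exact rowMax_offset_le_of_lt_offset hD hR hrev hk1 (by omega) hp hq hpq hmax
  · exact (lt_rowMax_offset_of_offset_le hD hR hrev (by omega) hi hq hpq hmax).not_ge
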